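/- Menelaus' theorem: for a triangle ABC in ℝ² (A, B, C not collinear) and points P, Q, R different from the vertices lying on the lines BC, CA, AB respectively, the points P, Q, R are collinear if and only if (B,C;P)·(C,A;Q)·(A,B;R) = -1. -/

import Mathlib

open scoped Classical

/-- The signed ratio `(X,Y;Z)`: equal to `XZ/YZ` if `Z` is (strictly) between `X` and `Y`,
and `-(XZ/YZ)` otherwise. -/
noncomputable def sratio {V : Type*} [NormedAddCommGroup V] [NormedSpace ℝ V]
    (X Y Z : V) : ℝ :=
  if Sbtw ℝ X Z Y then dist X Z / dist Y Z else -(dist X Z / dist Y Z)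

/-!
Parametrize `P = lineMap B C p`, `Q = lineMap C A q`, `R = lineMap A B r`; then
`(B,C;P) = p / (1 - p)` and similarly for `Q`, `R`. Writing `Q - P` and `R - P` in the basis
`B - A, C - A`, the points `P, Q, R` are collinear iff the determinant of the coefficients
vanishes, and that determinant is `p q r + (1 - p)(1 - q)(1 - r)`.
-/

open AffineMap

section Affine

variable {k V P : Type*} [Field k] [AddCommGroup V] [Module k V] [AddTorsor V P]

theorem affineIndependent_iff_linearIndependent_vsub_pair {p₁ p₂ p₃ : P} :
    AffineIndependent k ![p₁, p₂, p₃] ↔ LinearIndependent k ![p₂ -ᵥ p₁, p₃ -ᵥ p₁] := by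
  rw [affineIndependent_iff_linearIndependent_vsub k _ 0,
    ← linearIndependent_equiv (finSuccAboveEquiv (0 : Fin 3))]
  congr! 1
  ext i
  fin_cases i <;> rfl

theorem collinear_iff_not_linearIndependent_vsub {p₁ p₂ p₃ : P} :
    Collinear k ({p₁, p₂, p₃} : Set P) ↔ ¬LinearIndependent k ![p₂ -ᵥ p₁, p₃ -ᵥ p₁] := by
  rw [collinear_iff_not_affineIndependent_set, affineIndependent_iff_linearIndependent_vsub_pair]

theorem Collinear.exists_lineMap_eq {p₁ p₂ p : P} (h : Collinear k ({p₁, p₂, p} : Set P))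
    (hne : p₁ ≠ p₂) : ∃ t : k, lineMap p₁ p₂ t = p :=
  mem_affineSpan_pair_iff_exists_lineMap_eq.mp <|
    h.mem_affineSpan_of_mem_of_ne (by simp) (by simp) (by simp) hne

theorem collinear_lineMap_lineMap_lineMap_iff {A B C : P}
    (h : ¬Collinear k ({A, B, C} : Set P)) (p q r : k) :
    Collinear k ({lineMap B C p, lineMap C A q, lineMap A B r} : Set P) ↔
      p * q * r + (1 - p) * (1 - q) * (1 - r) = 0 := by
  rw [collinear_iff_not_linearIndependent_vsub, not_not] at h
  have hP : lineMap B C p -ᵥ A = (1 - p) • (B -ᵥ A) + p • (C -ᵥ A) := by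
    rw [← vsub_add_vsub_cancel _ B A, lineMap_vsub_left, ← vsub_sub_vsub_cancel_right C B A]
    module
  have hQP : lineMap C A q -ᵥ lineMap B C p = (p - 1) • (B -ᵥ A) + (1 - p - q) • (C -ᵥ A) := by
    rw [← vsub_sub_vsub_cancel_right _ _ A, hP, lineMap_vsub_right]
    module
  have hRP : lineMap A B r -ᵥ lineMap B C p = (r - 1 + p) • (B -ᵥ A) + (-p) • (C -ᵥ A) := by
    rw [← vsub_sub_vsub_cancel_right _ _ A, hP, lineMap_vsub_left]
    module
  rw [collinear_iff_not_linearIndependent_vsub, hQP, hRP,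
    LinearIndependent.pair_add_smul_add_smul_iff, not_and, not_not]
  constructor
  · intro hc; linear_combination hc h
  · intro hc _; linear_combination hc

end Affine

-- No `t ≠ 1` is needed: at `t = 1` both sides are `0` by the convention `x / 0 = 0`.
theorem sratio_lineMap {V : Type*} [NormedAddCommGroup V] [NormedSpace ℝ V] {X Y : V}
    (h : X ≠ Y) (t : ℝ) : sratio X Y (lineMap X Y t) = t / (1 - t) := by
  rw [sratio, sbtw_lineMap_iff, dist_left_lineMap, dist_right_lineMap,
    mul_div_mul_right _ _ (dist_ne_zero.mpr h), Real.norm_eq_abs, Real.norm_eq_abs,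
    and_iff_right h, Set.mem_Ioo]
  split_ifs with ht
  · rw [abs_of_pos ht.1, abs_of_pos (sub_pos.mpr ht.2)]
  · rw [not_and, not_lt] at ht
    rcases le_or_gt t 0 with h0 | h0
    · rw [abs_of_nonpos h0, abs_of_pos (by linarith), neg_div, neg_neg]
    · rw [abs_of_pos h0, abs_of_nonpos (by linarith [ht h0]), div_neg, neg_neg]

theorem menelaus (A B C P Q R : EuclideanSpace ℝ (Fin 2))
    (hABC : ¬ Collinear ℝ ({A, B, C} : Set (EuclideanSpace ℝ (Fin 2))))
    (hP : Collinear ℝ ({B, C, P} : Set (EuclideanSpace ℝ (Fin 2))))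
    (hPC : P ≠ C)
    (hQ : Collinear ℝ ({C, A, Q} : Set (EuclideanSpace ℝ (Fin 2))))
    (hQA : Q ≠ A)
    (hR : Collinear ℝ ({A, B, R} : Set (EuclideanSpace ℝ (Fin 2))))
    (hRB : R ≠ B) :
    Collinear ℝ ({P, Q, R} : Set (EuclideanSpace ℝ (Fin 2))) ↔
      sratio B C P * sratio C A Q * sratio A B R = -1 := by
  have hAB : A ≠ B := ne₁₂_of_not_collinear hABC
  have hBC : B ≠ C := ne₂₃_of_not_collinear hABC
  have hCA : C ≠ A := (ne₁₃_of_not_collinear hABC).symm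
  obtain ⟨p, rfl⟩ := hP.exists_lineMap_eq hBC
  obtain ⟨q, rfl⟩ := hQ.exists_lineMap_eq hCA
  obtain ⟨r, rfl⟩ := hR.exists_lineMap_eq hAB
  have hp : 1 - p ≠ 0 := sub_ne_zero.mpr fun h => hPC (by rw [← h, lineMap_apply_one])
  have hq : 1 - q ≠ 0 := sub_ne_zero.mpr fun h => hQA (by rw [← h, lineMap_apply_one])
  have hr : 1 - r ≠ 0 := sub_ne_zero.mpr fun h => hRB (by rw [← h, lineMap_apply_one])
  rw [collinear_lineMap_lineMap_lineMap_iff hABC, sratio_lineMap hBC, sratio_lineMap hCA,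
    sratio_lineMap hAB, div_mul_div_comm, div_mul_div_comm, div_eq_iff (by positivity)]
  constructor <;> intro h <;> linear_combination h
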